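/- arXiv:math/0409274 — 2 statements merged into one kernel-verified Lean document; each statement's English description precedes it below -/
import Mathlib

section
/- If the kernel k is uniformly bounded by C on ℝ≥0 × ℝ≥0, then any solution H of the Kraichnan equation ∂_s H(s,t) = ∫_t^s H(s,u) H(u,t) k(s,u) du with H(t,t)=1, given by the non-crossing pairing series, satisfies H(s,t) ≤ exp(2√C (s−t)) for all s ≥ t. -/
/-!
The `n`-th term of the series is a sum, over the non-crossing pairings `σ` of `2n` points, of
integrals over the ordered simplex in `[t, s]^{2n}`. Each integrand is a product of `n` kernel
values, hence at most `C^n`; the simplex has volume `(s-t)^{2n}/(2n)!`, because its images under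
the coordinate permutations tile the cube up to the null set of tuples with a repeated entry; and
a non-crossing pairing is determined by its set of openers `{i | i < σ i}`, so there are at most
`4^n` of them. Hence the `n`-th term is at most `(2√C (s-t))^{2n}/(2n)!`, and the series is
bounded by `cosh (2√C (s-t)) ≤ exp (2√C (s-t))`.
-/

open MeasureTheory Finset
open scoped Classical

/-- `σ` is a non-crossing pairing: an involution without fixed points such that the
crossing situation `i < j < σ i < σ j` never occurs. -/
def IsNCPairing {m : ℕ} (σ : Equiv.Perm (Fin m)) : Prop :=
  (∀ i, σ (σ i) = i) ∧ (∀ i, σ i ≠ i) ∧ ∀ i j : Fin m, i < j → j < σ i → ¬ σ i < σ j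

/-- The `n`-th term of the pairing series:
`Σ_{σ ∈ NCP_n} ∫_{t ≤ t_1 ≤ ⋯ ≤ t_{2n} ≤ s} Π_{i ∈ cr(σ)} k(t_i, t_{σ(i)}) dt`. -/
noncomputable def pairingTerm (k : ℝ → ℝ → ℝ) (n : ℕ) (t s : ℝ) : ℝ :=
  ∑ σ ∈ Finset.univ.filter (fun σ : Equiv.Perm (Fin (2 * n)) => IsNCPairing σ),
    ∫ x in {x : Fin (2 * n) → ℝ | Monotone x ∧ ∀ i, x i ∈ Set.Icc t s},
      ∏ i ∈ Finset.univ.filter (fun i => i < σ i), k (x i) (x (σ i))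

/-- The non-crossing pairing series `H(s,t)`. -/
noncomputable def kraichnanSeries (k : ℝ → ℝ → ℝ) (s t : ℝ) : ℝ :=
  ∑' n : ℕ, pairingTerm k n t s

open scoped ENNReal Nat

theorem Function.Involutive.two_mul_card_lt_apply {α : Type*} [Fintype α] [LinearOrder α]
    {f : α → α} (hf : Function.Involutive f) (hfix : ∀ i, f i ≠ i) :
    2 * #{i | i < f i} = Fintype.card α := by
  have hclosers : #{i | f i < i} = #{i | i < f i} :=
    card_nbij' f f (fun i hi => by simpa [hf i] using hi) (fun i hi => by simpa [hf i] using hi)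
      (fun i _ => hf i) (fun i _ => hf i)
  have hsplit : univ.filter (fun i => ¬ i < f i) = univ.filter fun i => f i < i :=
    filter_congr fun i _ => by rw [not_lt, le_iff_lt_or_eq, or_iff_left (hfix i)]
  rw [← card_univ, ← card_filter_add_card_filter_not (s := univ) (fun i => i < f i), hsplit,
    hclosers]
  ring

namespace IsNCPairing

variable {m : ℕ} {σ τ : Equiv.Perm (Fin m)}

theorem involutive (hσ : IsNCPairing σ) : Function.Involutive σ := hσ.1

theorem apply_lt_iff_not_lt (hσ : IsNCPairing σ) {i : Fin m} : σ i < i ↔ ¬ i < σ i :=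
  ⟨fun h => h.not_gt, (hσ.2.1 i).lt_or_gt.resolve_right⟩

theorem apply_mem_Ioo (hσ : IsNCPairing σ) {i j : Fin m} (hj : j ∈ Set.Ioo i (σ i)) :
    σ j ∈ Set.Ioo i (σ i) := by
  obtain ⟨hinv, -, hcross⟩ := hσ
  obtain ⟨hij, hjσ⟩ := hj
  refine ⟨lt_of_le_of_ne (not_lt.1 fun h => ?_) fun h => ?_,
    lt_of_le_of_ne (not_lt.1 (hcross i j hij hjσ)) fun h => ?_⟩
  · exact hcross (σ j) i h (by rwa [hinv]) (by rwa [hinv])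
  · exact hjσ.ne (by rw [h, hinv])
  · exact hij.ne' (σ.injective h)

theorem card_lt_apply {n : ℕ} {σ : Equiv.Perm (Fin (2 * n))} (hσ : IsNCPairing σ) :
    #{i | i < σ i} = n := by
  have := hσ.involutive.two_mul_card_lt_apply hσ.2.1
  rw [Fintype.card_fin] at this
  omega

theorem eq_of_lt_apply_iff (hσ : IsNCPairing σ) (hτ : IsNCPairing τ)
    (h : ∀ i, i < σ i ↔ i < τ i) : σ = τ := by
  -- Induction on the length of the `σ`-arc opened at `i`: if `τ` closes it elsewhere, nesting
  -- yields a shorter `σ`-arc inside it on which `σ` and `τ` already disagree.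
  have hopen : ∀ d i, (σ i : ℕ) - i = d → i < σ i → τ i = σ i := by
    intro d
    induction d using Nat.strong_induction_on with
    | _ d ih =>
    rintro i rfl hi
    rcases lt_trichotomy (τ i) (σ i) with hlt | heq | hgt
    · have hc : τ i ∈ Set.Ioo i (σ i) := ⟨(h i).1 hi, hlt⟩
      have hp : σ (τ i) < τ i :=
        hσ.apply_lt_iff_not_lt.2 (by rw [h, hτ.involutive]; exact hc.1.not_gt)
      have hpi := (hσ.apply_mem_Ioo hc).1
      have := ih _ (by rw [hσ.involutive]; omega) (σ (τ i)) rfl (by rwa [hσ.involutive])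
      rw [hσ.involutive] at this
      exact absurd (τ.injective this) hpi.ne'
    · exact heq
    · have hq : τ (σ i) < σ i :=
        hτ.apply_lt_iff_not_lt.2 (by rw [← h, hσ.involutive]; exact hi.not_gt)
      have hqi := (hτ.apply_mem_Ioo ⟨hi, hgt⟩).1
      obtain ⟨-, hqσ⟩ := hσ.apply_mem_Ioo ⟨hqi, hq⟩
      have := ih _ (by omega) (τ (σ i)) rfl ((h _).2 (by rwa [hτ.involutive]))
      rw [hτ.involutive] at this
      exact absurd (σ.injective this) hqi.ne
  refine Equiv.ext fun i => ?_
  by_cases hi : i < σ i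
  · exact (hopen _ i rfl hi).symm
  · have hσi : σ i < σ (σ i) := by rw [hσ.involutive]; exact hσ.apply_lt_iff_not_lt.2 hi
    have := hopen _ _ rfl hσi
    rw [hσ.involutive] at this
    rw [← hτ.involutive (σ i), this]

end IsNCPairing

theorem card_isNCPairing_le (m : ℕ) : #{σ : Equiv.Perm (Fin m) | IsNCPairing σ} ≤ 2 ^ m :=
  calc #{σ : Equiv.Perm (Fin m) | IsNCPairing σ} ≤ #(univ : Finset (Finset (Fin m))) :=
        card_le_card_of_injOn (fun σ => univ.filter fun i => i < σ i) (fun _ _ => mem_univ _)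
          fun σ hσ τ hτ hστ => by
            simp only [coe_filter, mem_univ, true_and] at hσ hτ
            exact hσ.eq_of_lt_apply_iff hτ fun i => by simpa using congr(i ∈ $hστ)
    _ = 2 ^ m := by simp

theorem isOpen_setOf_strictMono {ι α : Type*} [Finite ι] [Preorder ι] [TopologicalSpace α]
    [LinearOrder α] [OrderClosedTopology α] : IsOpen {x : ι → α | StrictMono x} := by
  simp only [StrictMono, Set.ofPred_forall]
  exact isOpen_iInter_of_finite fun i => isOpen_iInter_of_finite fun j =>
    isOpen_iInter_of_finite fun _ => isOpen_lt (continuous_apply i) (continuous_apply j)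

theorem Equiv.Perm.eq_of_strictMono_comp {ι α : Type*} [LinearOrder ι] [WellFoundedLT ι]
    [Preorder α] {x : ι → α} {π ρ : Equiv.Perm ι} (hπ : StrictMono (x ∘ π))
    (hρ : StrictMono (x ∘ ρ)) : π = ρ := by
  have hcomp : x ∘ π = x ∘ ρ := (hπ.range_inj hρ).1 <| by
    rw [π.surjective.range_comp, ρ.surjective.range_comp]
  have hx : Function.Injective x := hπ.injective.of_comp_right π.surjective
  exact Equiv.ext fun i => hx (congrFun hcomp i)

section Simplex

variable {ι : Type*} [Fintype ι]

theorem measurePreserving_comp_perm {β : Type*} [MeasureSpace β]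
    [SigmaFinite (volume : Measure β)]
    (π : Equiv.Perm ι) : MeasurePreserving (fun x : ι → β => x ∘ π) :=
  volume_preserving_arrowCongr' π.symm (MeasurableEquiv.refl β) (.id _)

theorem volume_setOf_apply_eq_apply {i j : ι} (hij : i ≠ j) :
    volume {x : ι → ℝ | x i = x j} = 0 := by
  have hker : {x : ι → ℝ | x i = x j} =
      (LinearMap.ker ((LinearMap.proj i : (ι → ℝ) →ₗ[ℝ] ℝ) - LinearMap.proj j) : Set (ι → ℝ)) := by
    ext x
    simp [sub_eq_zero]
  rw [hker]
  refine Measure.addHaar_submodule _ _ fun htop => ?_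
  have := LinearMap.congr_fun (LinearMap.ker_eq_top.1 htop) (Pi.single i 1)
  simp [hij.symm] at this

theorem ae_injective : ∀ᵐ x : ι → ℝ, Function.Injective x := by
  refine ae_all_iff.2 fun i => ae_all_iff.2 fun j => ?_
  rcases eq_or_ne i j with rfl | hij
  · exact .of_forall fun _ _ => rfl
  · exact measure_mono_null (fun x hx => (Classical.not_imp.1 hx).1)
      (volume_setOf_apply_eq_apply hij)

variable [LinearOrder ι]

theorem factorial_mul_volume_strictMono_le {I : Set ℝ} (hI : MeasurableSet I) :
    ((Fintype.card ι)! : ℝ≥0∞) * volume {x : ι → ℝ | StrictMono x ∧ ∀ i, x i ∈ I}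
      ≤ volume I ^ Fintype.card ι := by
  set S := {x : ι → ℝ | StrictMono x ∧ ∀ i, x i ∈ I}
  have hS : MeasurableSet S := by
    simp only [S, Set.ofPred_and, Set.ofPred_forall]
    exact isOpen_setOf_strictMono.measurableSet.inter
      (.iInter fun i => measurable_pi_apply i hI)
  set T : Equiv.Perm ι → Set (ι → ℝ) := fun π => (fun x => x ∘ π) ⁻¹' S
  have hdisj : Set.PairwiseDisjoint (univ : Finset (Equiv.Perm ι)) T :=
    fun π _ ρ _ hne => Set.disjoint_left.2 fun x hπ hρ =>
      hne (Equiv.Perm.eq_of_strictMono_comp hπ.1 hρ.1)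
  have hcube : ⋃ π ∈ (univ : Finset (Equiv.Perm ι)), T π ⊆ Set.univ.pi fun _ => I := by
    simp only [Set.iUnion_subset_iff]
    exact fun π _ x hx i _ => by simpa using hx.2 (π.symm i)
  calc ((Fintype.card ι)! : ℝ≥0∞) * volume S = ∑ π : Equiv.Perm ι, volume (T π) := by
        simp [T, (measurePreserving_comp_perm _).measure_preimage hS.nullMeasurableSet,
          Fintype.card_perm]
    _ = volume (⋃ π ∈ (univ : Finset (Equiv.Perm ι)), T π) :=
        (measure_biUnion_finset hdisj fun π _ =>
          hS.preimage (measurePreserving_comp_perm π).measurable).symm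
    _ ≤ volume (Set.univ.pi fun _ : ι => I) := measure_mono hcube
    _ = volume I ^ Fintype.card ι := by simp [volume_pi_pi]

theorem factorial_mul_volume_monotone_le {I : Set ℝ} (hI : MeasurableSet I) :
    ((Fintype.card ι)! : ℝ≥0∞) * volume {x : ι → ℝ | Monotone x ∧ ∀ i, x i ∈ I}
      ≤ volume I ^ Fintype.card ι := by
  refine le_trans (mul_le_mul_right (measure_mono_ae ?_) _) (factorial_mul_volume_strictMono_le hI)
  filter_upwards [ae_injective] with x hx hmono
  exact ⟨hmono.1.strictMono_of_injective hx, hmono.2⟩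

end Simplex

theorem volume_monotone_Icc_le {m : ℕ} {t s : ℝ} (hts : t ≤ s) :
    volume {x : Fin m → ℝ | Monotone x ∧ ∀ i, x i ∈ Set.Icc t s}
      ≤ ENNReal.ofReal ((s - t) ^ m / m !) := by
  rw [ENNReal.ofReal_div_of_pos (by positivity), ENNReal.ofReal_natCast,
    ENNReal.le_div_iff_mul_le (by simp [m.factorial_ne_zero]) (by simp), mul_comm,
    ENNReal.ofReal_pow (sub_nonneg.2 hts)]
  simpa using factorial_mul_volume_monotone_le (ι := Fin m) measurableSet_Icc

theorem pairingTerm_le {C : ℝ} {k : ℝ → ℝ → ℝ} {t s : ℝ} (hnn : ∀ x y, 0 ≤ k x y)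
    (hub : ∀ x y, k x y ≤ C) (hts : t ≤ s) (n : ℕ) :
    pairingTerm k n t s ≤ (2 * Real.sqrt C * (s - t)) ^ (2 * n) / (2 * n)! := by
  have hC : 0 ≤ C := (hnn 0 0).trans (hub 0 0)
  set S := {x : Fin (2 * n) → ℝ | Monotone x ∧ ∀ i, x i ∈ Set.Icc t s}
  set B := (s - t) ^ (2 * n) / (2 * n)!
  have hB : 0 ≤ B := div_nonneg (pow_nonneg (sub_nonneg.2 hts) _) (Nat.cast_nonneg _)
  have hS : volume S ≤ ENNReal.ofReal B := volume_monotone_Icc_le hts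
  have hintegral : ∀ σ : Equiv.Perm (Fin (2 * n)), IsNCPairing σ →
      ∫ x in S, ∏ i ∈ univ.filter (fun i => i < σ i), k (x i) (x (σ i)) ≤ C ^ n * B := by
    intro σ hσ
    have hbound : ∀ x ∈ S, ‖∏ i ∈ univ.filter (fun i => i < σ i), k (x i) (x (σ i))‖ ≤ C ^ n :=
      fun x _ => by
        rw [Real.norm_of_nonneg (prod_nonneg fun _ _ => hnn _ _)]
        calc _ ≤ ∏ i ∈ univ.filter (fun i => i < σ i), C :=
              prod_le_prod (fun _ _ => hnn _ _) fun _ _ => hub _ _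
          _ = C ^ n := by rw [prod_const, hσ.card_lt_apply]
    calc _ ≤ C ^ n * volume.real S :=
          (le_abs_self _).trans
            (norm_setIntegral_le_of_norm_le_const (hS.trans_lt ENNReal.ofReal_lt_top) hbound)
      _ ≤ C ^ n * B := by
          gcongr
          exact ENNReal.toReal_le_of_le_ofReal hB hS
  calc pairingTerm k n t s ≤ #{σ : Equiv.Perm (Fin (2 * n)) | IsNCPairing σ} * (C ^ n * B) := by
        rw [← nsmul_eq_mul, ← sum_const]
        exact sum_le_sum fun σ hσ => hintegral σ (mem_filter.1 hσ).2
    _ ≤ 2 ^ (2 * n) * (C ^ n * B) := by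
        gcongr
        exact_mod_cast card_isNCPairing_le _
    _ = (2 * Real.sqrt C * (s - t)) ^ (2 * n) / (2 * n)! := by
        rw [mul_pow, mul_pow, pow_mul (Real.sqrt C), Real.sq_sqrt hC]
        ring

theorem kraichnanSeries_le_of_bounded_general (C : ℝ) (k : ℝ → ℝ → ℝ)
    (hnn : ∀ x y, 0 ≤ k x y) (hub : ∀ x y, k x y ≤ C)
    (t s : ℝ) (hts : t ≤ s) :
    kraichnanSeries k s t ≤ Real.exp (2 * Real.sqrt C * (s - t)) := by
  set a := 2 * Real.sqrt C * (s - t)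
  have ha : 0 ≤ a := mul_nonneg (by positivity) (sub_nonneg.2 hts)
  calc kraichnanSeries k s t ≤ Real.cosh a :=
        tsum_le_of_sum_le' (Real.cosh_pos a).le fun F =>
          (sum_le_sum fun n _ => pairingTerm_le hnn hub hts n).trans
            (sum_le_hasSum F (fun n _ => by positivity) (Real.hasSum_cosh a))
    _ ≤ Real.exp a := by
        rw [← Real.exp_sub_sinh]
        linarith [Real.sinh_nonneg_iff.2 ha]

/-- If the kernel is uniformly bounded by `C`, the pairing-series solution of the Kraichnan
equation satisfies `H(s,t) ≤ exp(2√C (s−t))` for all `s ≥ t`. -/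
theorem kraichnanSeries_le_of_bounded (C : ℝ) (k : ℝ → ℝ → ℝ)
    (hk : Continuous fun p : ℝ × ℝ => k p.1 p.2)
    (hnn : ∀ x y, 0 ≤ k x y) (hub : ∀ x y, k x y ≤ C)
    (t s : ℝ) (ht : 0 ≤ t) (hts : t ≤ s) :
    kraichnanSeries k s t ≤ Real.exp (2 * Real.sqrt C * (s - t)) :=
  kraichnanSeries_le_of_bounded_general C k hnn hub t s hts
end

section
/- If k(u) = c₂ + c₁ e^{−δu} with c₁, c₂, δ > 0, then for λ greater than the abscissa of convergence λ_c of Ĥ, Ĥ(λ) = (1/(2c₂))[λ − c₁ Ĥ(λ+δ) − √((λ − c₁ Ĥ(λ+δ))² − 4c₂)], and in particular (λ − c₁ Ĥ(λ+δ))² ≥ 4c₂ for all λ > λ_c. -/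
/-!
The causal convolution structure of the equation turns it, under the Laplace transform, into
`B(λ) Ĥ(λ) = 1 + c₂ Ĥ(λ)²` with `B(λ) = λ - c₁ Ĥ(λ + δ)` (the factor `e^{-δu}` of the kernel
shifts the transform by `δ`). So `Ĥ(λ)` is a root of `c₂ a² - B a + 1`, whose discriminant
`B² - 4c₂ = ((1 - c₂ Ĥ²) / Ĥ)²` is automatically nonnegative, and it remains to see that `Ĥ(λ)` is
the smaller root, i.e. `c₂ Ĥ(λ)² ≤ 1`. Since `H ≥ 0`, `Ĥ` is nonincreasing, so `B` is
nondecreasing; `Ĥ` is continuous and tends to `0`. If `Ĥ(λ) > 1/√c₂`, then at a later point where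
`Ĥ = 1/√c₂` the relation forces `B = 2√c₂`, while `B(λ) = 1/Ĥ(λ) + c₂ Ĥ(λ) > 2√c₂`, contradicting
monotonicity.
-/

open MeasureTheory Set Filter Topology Real

noncomputable def laplace (f : ℝ → ℝ) (p : ℝ) : ℝ :=
  ∫ u in Ioi 0, exp (-p * u) * f u

def LaplaceIntegrable (f : ℝ → ℝ) (p : ℝ) : Prop :=
  IntegrableOn (fun u => exp (-p * u) * f u) (Ioi 0)

section Laplace

variable {f g : ℝ → ℝ} {μ ν : ℝ}

lemma norm_exp_mul_le_of_le {p q u : ℝ} (hqp : q ≤ p) (hu : 0 ≤ u) :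
    ‖exp (-p * u) * f u‖ ≤ ‖exp (-q * u) * f u‖ := by
  simp only [norm_mul, norm_of_nonneg (exp_pos _).le]
  gcongr

lemma LaplaceIntegrable.aestronglyMeasurable (hf : LaplaceIntegrable f μ) (ν : ℝ) :
    AEStronglyMeasurable (fun u => exp (-ν * u) * f u) (volume.restrict (Ioi 0)) := by
  refine ((by fun_prop : Continuous fun u => exp ((μ - ν) * u)).aestronglyMeasurable.mul
    hf.1).congr (Eventually.of_forall fun u => ?_)
  change exp ((μ - ν) * u) * (exp (-μ * u) * f u) = exp (-ν * u) * f u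
  rw [← mul_assoc, ← exp_add]
  ring_nf

lemma LaplaceIntegrable.mono (hf : LaplaceIntegrable f μ) (h : μ ≤ ν) :
    LaplaceIntegrable f ν :=
  Integrable.mono hf (hf.aestronglyMeasurable ν) <| by
    filter_upwards [ae_restrict_mem measurableSet_Ioi] with u hu
    exact norm_exp_mul_le_of_le h (le_of_lt hu)

lemma LaplaceIntegrable.intervalIntegrable (hf : LaplaceIntegrable f ν) {x : ℝ} (hx : 0 ≤ x) :
    IntervalIntegrable f volume 0 x := by
  rw [intervalIntegrable_iff_integrableOn_Ioc_of_le hx, ← integrableOn_Icc_iff_integrableOn_Ioc]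
  have : IntegrableOn (fun u => exp (ν * u) * (exp (-ν * u) * f u)) (Icc 0 x) :=
    ((integrableOn_Icc_iff_integrableOn_Ioc).2 (hf.mono_set Ioc_subset_Ioi_self)).continuousOn_mul
      (by fun_prop) isCompact_Icc
  refine this.congr_fun (fun u _ => ?_) measurableSet_Icc
  simp [← mul_assoc, ← exp_add]

lemma laplaceIntegrable_one (hν : 0 < ν) : LaplaceIntegrable (fun _ => 1) ν := by
  simpa [LaplaceIntegrable] using integrableOn_exp_mul_Ioi (neg_lt_zero.2 hν) 0

lemma laplace_one (hν : 0 < ν) : laplace (fun _ => 1) ν = 1 / ν := by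
  simp only [laplace, mul_one, integral_exp_mul_Ioi (neg_lt_zero.2 hν), mul_zero, exp_zero]
  field_simp

lemma laplace_nonneg (hf : ∀ u > 0, 0 ≤ f u) (ν : ℝ) : 0 ≤ laplace f ν :=
  setIntegral_nonneg measurableSet_Ioi fun u hu => mul_nonneg (exp_pos _).le (hf u hu)

lemma laplace_antitoneOn (hf : ∀ u > 0, 0 ≤ f u) (hint : LaplaceIntegrable f μ) :
    AntitoneOn (laplace f) (Ici μ) := fun p hp q _ hpq =>
  setIntegral_mono_on ((hint.mono hp).mono hpq) (hint.mono hp) measurableSet_Ioi fun u hu =>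
    mul_le_mul_of_nonneg_right (exp_le_exp.2 (by nlinarith [mem_Ioi.1 hu])) (hf u hu)

lemma monotoneOn_sub_mul_laplace_add (hf : ∀ u > 0, 0 ≤ f u) (hint : LaplaceIntegrable f μ)
    {c δ : ℝ} (hc : 0 ≤ c) (hδ : 0 ≤ δ) :
    MonotoneOn (fun p => p - c * laplace f (p + δ)) (Ici μ) := fun p hp q _ hpq =>
  sub_le_sub hpq <| mul_le_mul_of_nonneg_left (laplace_antitoneOn hf hint
    (mem_Ici.2 (by linarith [mem_Ici.1 hp])) (mem_Ici.2 (by linarith [mem_Ici.1 hp]))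
    (by linarith)) hc

lemma continuousOn_laplace (hint : LaplaceIntegrable f μ) : ContinuousOn (laplace f) (Ioi μ) :=
  fun ν hν => ContinuousAt.continuousWithinAt <|
    continuousAt_of_dominated (bound := fun u => ‖exp (-μ * u) * f u‖)
      (Eventually.of_forall hint.aestronglyMeasurable)
      (by
        filter_upwards [lt_mem_nhds (mem_Ioi.1 hν)] with p hp
        filter_upwards [ae_restrict_mem measurableSet_Ioi] with u hu
        exact norm_exp_mul_le_of_le hp.le (le_of_lt hu))
      hint.norm (Eventually.of_forall fun u => by fun_prop)

lemma tendsto_laplace_atTop (hint : LaplaceIntegrable f μ) :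
    Tendsto (laplace f) atTop (𝓝 0) := by
  have hlim := tendsto_integral_filter_of_dominated_convergence
    (F := fun p u => exp (-p * u) * f u) (f := fun _ => 0) (μ := volume.restrict (Ioi 0))
    (fun u => ‖exp (-μ * u) * f u‖) (Eventually.of_forall hint.aestronglyMeasurable)
    (by
      filter_upwards [eventually_ge_atTop μ] with p hp
      filter_upwards [ae_restrict_mem measurableSet_Ioi] with u hu
      exact norm_exp_mul_le_of_le hp (le_of_lt hu))
    hint.norm
    (by
      filter_upwards [ae_restrict_mem measurableSet_Ioi] with u (hu : 0 < u)
      have hexp : Tendsto (fun p => -p * u) atTop atBot := by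
        simpa [Function.comp_def] using tendsto_neg_atTop_atBot.comp (tendsto_id.atTop_mul_const hu)
      simpa using (tendsto_exp_atBot.comp hexp).mul_const (f u))
  rwa [integral_zero] at hlim

lemma LaplaceIntegrable.pos_of_one_le (hint : LaplaceIntegrable f μ) (hf : ∀ u > 0, 1 ≤ f u) :
    0 < μ := by
  by_contra! hμ
  have hone : IntegrableOn (fun _ : ℝ => (1 : ℝ)) (Ioi 0) := by
    refine Integrable.mono' hint aestronglyMeasurable_const ?_
    filter_upwards [ae_restrict_mem measurableSet_Ioi] with u (hu : 0 < u)
    rw [norm_one]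
    exact one_le_mul_of_one_le_of_one_le (one_le_exp (by nlinarith)) (hf u hu)
  simp at hone

lemma exp_mul_intervalIntegral_mul_sub (x : ℝ) :
    exp (-ν * x) * ∫ t in 0..x, f t * g (x - t)
      = ∫ t in 0..x, (exp (-ν * t) * f t) * (exp (-ν * (x - t)) * g (x - t)) := by
  rw [← intervalIntegral.integral_const_mul]
  congr 1 with t
  rw [show -ν * x = -ν * t + -ν * (x - t) by ring, exp_add]
  ring

lemma LaplaceIntegrable.intervalIntegral_mul_sub (hf : LaplaceIntegrable f ν)
    (hg : LaplaceIntegrable g ν) : LaplaceIntegrable (fun x => ∫ t in 0..x, f t * g (x - t)) ν := by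
  refine (integrable_posConvolution hf hg (ContinuousLinearMap.mul ℝ ℝ)).integrableOn.congr_fun
    (fun x hx => ?_) measurableSet_Ioi
  rw [posConvolution, indicator_of_mem hx, exp_mul_intervalIntegral_mul_sub]
  rfl

lemma laplace_intervalIntegral_mul_sub (hf : LaplaceIntegrable f ν) (hg : LaplaceIntegrable g ν) :
    laplace (fun x => ∫ t in 0..x, f t * g (x - t)) ν = laplace f ν * laplace g ν := by
  rw [laplace, setIntegral_congr_fun measurableSet_Ioi fun x _ =>
    exp_mul_intervalIntegral_mul_sub x]
  exact integral_posConvolution hf hg (ContinuousLinearMap.mul ℝ ℝ)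

lemma mul_laplace_eq_of_hasDerivAt {F G : ℝ → ℝ} (hν : 0 < ν)
    (hF : ∀ x ≥ 0, HasDerivAt F (G x) x) (hFi : LaplaceIntegrable F ν)
    (hGi : LaplaceIntegrable G ν) :
    ν * laplace F ν = F 0 + laplace G ν := by
  -- `F - F 0` is the causal convolution of `G` with `1`, whose transform is `1 / ν`.
  have hftc : ∀ x > 0, exp (-ν * x) * ∫ t in 0..x, G t * 1
      = exp (-ν * x) * F x - F 0 * (exp (-ν * x) * 1) := fun x hx => by
    simp_rw [mul_one]
    rw [intervalIntegral.integral_eq_sub_of_hasDerivAt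
      (fun t ht => hF t (by rw [uIcc_of_le hx.le] at ht; exact ht.1))
      (hGi.intervalIntegrable hx.le)]
    ring
  have hconv : laplace F ν - F 0 * laplace (fun _ => 1) ν
      = laplace G ν * laplace (fun _ => 1) ν := by
    rw [← laplace_intervalIntegral_mul_sub hGi (laplaceIntegrable_one hν)]
    simp only [laplace]
    rw [← integral_const_mul, ← integral_sub hFi ((laplaceIntegrable_one hν).const_mul _)]
    exact setIntegral_congr_fun measurableSet_Ioi fun x hx => (hftc x hx).symm
  rw [laplace_one hν] at hconv
  field_simp at hconv
  linarith

lemma laplace_mul_add_exp {δ : ℝ} (a b : ℝ) (hf : LaplaceIntegrable f ν)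
    (hfδ : LaplaceIntegrable f (ν + δ)) :
    LaplaceIntegrable (fun u => f u * (a + b * exp (-δ * u))) ν ∧
      laplace (fun u => f u * (a + b * exp (-δ * u))) ν
        = a * laplace f ν + b * laplace f (ν + δ) := by
  have hsplit : (fun u => exp (-ν * u) * (f u * (a + b * exp (-δ * u))))
      = fun u => a * (exp (-ν * u) * f u) + b * (exp (-(ν + δ) * u) * f u) := by
    ext u
    rw [show -(ν + δ) * u = -ν * u + -δ * u by ring, exp_add]
    ring
  refine ⟨?_, ?_⟩
  · rw [LaplaceIntegrable, hsplit]
    exact (hf.const_mul a).add (hfδ.const_mul b)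
  · rw [laplace, hsplit, integral_add (hf.const_mul a) (hfδ.const_mul b), integral_const_mul,
      integral_const_mul]
    rfl

end Laplace

section Kraichnan

variable {k H : ℝ → ℝ}

lemma monotoneOn_of_kraichnan (hk : ∀ u ≥ 0, 0 ≤ k u) (hH : ∀ u ≥ 0, 0 ≤ H u)
    (hode : ∀ x ≥ 0, HasDerivAt H (∫ u in 0..x, H (x - u) * H u * k (x - u)) x) :
    MonotoneOn H (Ici 0) := by
  refine monotoneOn_of_hasDerivWithinAt_nonneg (convex_Ici 0)
    (fun x hx => (hode x hx).continuousAt.continuousWithinAt)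
    (fun x hx => (hode x (interior_subset hx)).hasDerivWithinAt) fun x hx => ?_
  have hx : 0 ≤ x := interior_subset hx
  refine intervalIntegral.integral_nonneg hx fun u hu => ?_
  have := hH (x - u) (by linarith [hu.2])
  have := hH u hu.1
  have := hk (x - u) (by linarith [hu.2])
  positivity

lemma mul_laplace_eq_of_kraichnan {ν : ℝ} (hν : 0 < ν)
    (hode : ∀ x ≥ 0, HasDerivAt H (∫ u in 0..x, H (x - u) * H u * k (x - u)) x)
    (hH : LaplaceIntegrable H ν) (hHk : LaplaceIntegrable (fun u => H u * k u) ν) :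
    ν * laplace H ν = H 0 + laplace H ν * laplace (fun u => H u * k u) ν := by
  have hconv : ∀ x, ∫ u in 0..x, H (x - u) * H u * k (x - u)
      = ∫ t in 0..x, H t * (H (x - t) * k (x - t)) := fun x => by
    congr 1 with u
    ring
  rw [← laplace_intervalIntegral_mul_sub hH hHk]
  exact mul_laplace_eq_of_hasDerivAt hν (fun x hx => hconv x ▸ hode x hx) hH
    (hH.intervalIntegral_mul_sub hHk)

lemma sub_mul_laplace_eq_of_kraichnan_mixed {c₁ c₂ δ ν : ℝ} (hν : 0 < ν)
    (hode : ∀ x ≥ 0, HasDerivAt H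
      (∫ u in 0..x, H (x - u) * H u * (c₂ + c₁ * exp (-δ * (x - u)))) x)
    (hH : LaplaceIntegrable H ν) (hHδ : LaplaceIntegrable H (ν + δ)) :
    (ν - c₁ * laplace H (ν + δ)) * laplace H ν = H 0 + c₂ * laplace H ν ^ 2 := by
  obtain ⟨hHk, hlap⟩ := laplace_mul_add_exp c₂ c₁ hH hHδ
  have := mul_laplace_eq_of_kraichnan hν hode hH hHk
  rw [hlap] at this
  linear_combination this

end Kraichnan

lemma four_mul_le_sq_and_eq_smaller_root {a b c : ℝ} (hc : 0 < c) (ha : 0 < a)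
    (hab : b * a = 1 + c * a ^ 2) (hsmall : c * a ^ 2 ≤ 1) :
    b ^ 2 ≥ 4 * c ∧ a = 1 / (2 * c) * (b - √(b ^ 2 - 4 * c)) := by
  have hdisc : b ^ 2 - 4 * c = ((1 - c * a ^ 2) / a) ^ 2 := by
    field_simp
    linear_combination (b * a + 1 + c * a ^ 2) * hab
  refine ⟨sub_nonneg.1 (hdisc ▸ sq_nonneg _), ?_⟩
  rw [hdisc, sqrt_sq (div_nonneg (sub_nonneg.2 hsmall) ha.le)]
  field_simp
  linear_combination -hab

lemma mul_sq_le_one_of_tendsto_zero {A B : ℝ → ℝ} {c μ l : ℝ} (hc : 0 < c)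
    (hAc : ContinuousOn A (Ioi μ)) (hA : Tendsto A atTop (𝓝 0)) (hApos : ∀ p > μ, 0 < A p)
    (hB : MonotoneOn B (Ioi μ)) (hBA : ∀ p > μ, B p * A p = 1 + c * A p ^ 2) (hl : μ < l) :
    c * A l ^ 2 ≤ 1 := by
  by_contra! hgt
  set a₀ := 1 / √c
  have ha₀ : 0 < a₀ := by positivity
  have hca₀ : c * a₀ ^ 2 = 1 := by
    rw [div_pow, sq_sqrt hc.le]
    field_simp
  have hla₀ : a₀ < A l := lt_of_pow_lt_pow_left₀ 2 (hApos l hl).le (by nlinarith)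
  obtain ⟨M, hAM, hM⟩ := ((hA.eventually (gt_mem_nhds ha₀)).and (eventually_ge_atTop l)).exists
  obtain ⟨p, hp, hAp⟩ := intermediate_value_Icc' hM (hAc.mono fun x hx => hl.trans_le hx.1)
    ⟨hAM.le, hla₀.le⟩
  have hμp : μ < p := hl.trans_le hp.1
  have hBpa₀ := hBA p hμp
  rw [hAp] at hBpa₀
  have hBp : B p = 2 * c * a₀ := by
    linear_combination (c * a₀) * hBpa₀ + (c * a₀ - B p) * hca₀
  have hBl : B l * A l ≤ B p * A l :=
    mul_le_mul_of_nonneg_right (hB hl hμp hp.1) (hApos l hl).le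
  nlinarith [hBA l hl, mul_pos hc (pow_pos (sub_pos.2 hla₀) 2)]

theorem laplace_mixed_kernel_general (c₁ c₂ δ : ℝ) (hc₁ : 0 < c₁) (hc₂ : 0 < c₂) (hδ : 0 < δ)
    (H : ℝ → ℝ) (hHnn : ∀ u, 0 ≤ H u) (hH0 : H 0 = 1)
    (hode : ∀ x ≥ (0:ℝ),
      HasDerivAt H
        (∫ u in (0:ℝ)..x,
          H (x - u) * H u * (c₂ + c₁ * Real.exp (-δ * (x - u)))) x)
    (l μ : ℝ) (hμl : μ < l)
    (hint : IntegrableOn (fun u => Real.exp (-μ * u) * H u) (Set.Ioi 0)) :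
    (l - c₁ * ∫ u in Set.Ioi (0:ℝ), Real.exp (-(l + δ) * u) * H u) ^ 2 ≥ 4 * c₂ ∧
    (∫ u in Set.Ioi (0:ℝ), Real.exp (-l * u) * H u)
      = (1 / (2 * c₂)) *
        ((l - c₁ * ∫ u in Set.Ioi (0:ℝ), Real.exp (-(l + δ) * u) * H u) -
          Real.sqrt
            ((l - c₁ * ∫ u in Set.Ioi (0:ℝ), Real.exp (-(l + δ) * u) * H u) ^ 2
              - 4 * c₂)) := by
  have hHμ : LaplaceIntegrable H μ := hint
  have hmono := monotoneOn_of_kraichnan (k := fun u => c₂ + c₁ * exp (-δ * u))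
    (fun u _ => by positivity) (fun u _ => hHnn u) hode
  have hμ : 0 < μ := hHμ.pos_of_one_le fun u hu => hH0 ▸ hmono self_mem_Ici hu.le hu.le
  have hBA : ∀ p > μ, (p - c₁ * laplace H (p + δ)) * laplace H p = 1 + c₂ * laplace H p ^ 2 :=
    fun p hp => hH0 ▸ sub_mul_laplace_eq_of_kraichnan_mixed (hμ.trans hp) hode (hHμ.mono hp.le)
      (hHμ.mono (by linarith))
  have hApos : ∀ p > μ, 0 < laplace H p := fun p hp =>
    (laplace_nonneg (fun u _ => hHnn u) p).lt_of_ne fun h => by simpa [← h] using hBA p hp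
  have hBmono := (monotoneOn_sub_mul_laplace_add (fun u _ => hHnn u) hHμ hc₁.le hδ.le).mono
    Ioi_subset_Ici_self
  exact four_mul_le_sq_and_eq_smaller_root hc₂ (hApos l hμl) (hBA l hμl)
    (mul_sq_le_one_of_tendsto_zero hc₂ (continuousOn_laplace hHμ) (tendsto_laplace_atTop hHμ)
      hApos hBmono hBA hμl)

/-- For the kernel `k(u) = c₂ + c₁ e^{−δu}`, the Laplace transform of the solution of the
Kraichnan equation satisfies, for `λ` strictly above the abscissa of convergence,
`Ĥ(λ) = (1/(2c₂))[λ − c₁Ĥ(λ+δ) − √((λ − c₁Ĥ(λ+δ))² − 4c₂)]`, and in particular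
`(λ − c₁Ĥ(λ+δ))² ≥ 4c₂`. -/
theorem laplace_mixed_kernel (c₁ c₂ δ : ℝ) (hc₁ : 0 < c₁) (hc₂ : 0 < c₂) (hδ : 0 < δ)
    (H : ℝ → ℝ) (hHc : Continuous H) (hHnn : ∀ u, 0 ≤ H u) (hH0 : H 0 = 1)
    (hode : ∀ x ≥ (0:ℝ),
      HasDerivAt H
        (∫ u in (0:ℝ)..x,
          H (x - u) * H u * (c₂ + c₁ * Real.exp (-δ * (x - u)))) x)
    (l μ : ℝ) (hμl : μ < l)
    (hint : IntegrableOn (fun u => Real.exp (-μ * u) * H u) (Set.Ioi 0)) :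
    (l - c₁ * ∫ u in Set.Ioi (0:ℝ), Real.exp (-(l + δ) * u) * H u) ^ 2 ≥ 4 * c₂ ∧
    (∫ u in Set.Ioi (0:ℝ), Real.exp (-l * u) * H u)
      = (1 / (2 * c₂)) *
        ((l - c₁ * ∫ u in Set.Ioi (0:ℝ), Real.exp (-(l + δ) * u) * H u) -
          Real.sqrt
            ((l - c₁ * ∫ u in Set.Ioi (0:ℝ), Real.exp (-(l + δ) * u) * H u) ^ 2
              - 4 * c₂)) :=
  laplace_mixed_kernel_general c₁ c₂ δ hc₁ hc₂ hδ H hHnn hH0 hode l μ hμl hint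
end
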